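/- For $0 < r_1 < r_2$ and a source point $x$ with $\|x\| \le r_1$, the function $y \mapsto 1/\|y - x\|$ on the sphere $\|y\| = r_2$ admits the bound $\left|\frac{1}{\|y-x\|} - \sum_{l=0}^{c} \frac{\|x\|^l}{r_2^{l+1}} P_l(\cos\theta)\right| \le \frac{1}{r_2 - r_1}\left(\frac{r_1}{r_2}\right)^{c+1}$, where $\theta$ is the angle between $x$ and $y$ and $P_l$ are the Legendre polynomials. -/

import Mathlib

/-!
Write `t = (w + w̄) / 2` with `‖w‖ = 1`, so that `1 - 2 t z + z² = (1 - w z)(1 - w̄ z)`. The product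
of the binomial series of `(1 - w z)^(-1/2)` and `(1 - w̄ z)^(-1/2)` has coefficients satisfying
Bonnet's recurrence (each factor solves `2 (1 - w z) f' = w f`), as do the Rodrigues polynomials, so
these coefficients are the `Pₙ(t)`. They are averages of the unimodular numbers `wᵏ w̄ⁿ⁻ᵏ` with
weights `C(2k, k) C(2n - 2k, n - k) / 4ⁿ` summing to one, hence `|Pₙ(t)| ≤ 1`, and the series sums
to `‖1 - w z‖⁻¹ = (1 - 2 t z + z²)^(-1/2)`. With `z = ‖x‖ / r₂` the truncation error is then at
most the geometric tail `∑_{l > c} zˡ / r₂`.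
-/

open scoped RealInnerProductSpace

noncomputable section

/-- The Legendre polynomial of degree `n`, via the Rodrigues formula. -/
def legendre (n : ℕ) : Polynomial ℝ :=
  (1 / ((2 : ℝ) ^ n * n.factorial)) • Polynomial.derivative^[n] ((Polynomial.X ^ 2 - 1) ^ n)

section Rodrigues

open Polynomial

variable {R : Type*} [CommRing R]

lemma derivative_X_sq_sub_one_pow_succ (n : ℕ) :
    derivative ((X ^ 2 - 1 : R[X]) ^ (n + 1)) = (2 * (n + 1)) • (X * (X ^ 2 - 1) ^ n) := by
  rw [derivative_pow, derivative_sub, derivative_X_pow, derivative_one, nsmul_eq_mul]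
  simp only [map_ofNat, Nat.cast_ofNat, sub_zero, Nat.add_sub_cancel, Nat.cast_add, Nat.cast_one,
    Nat.cast_mul, map_add, map_natCast, map_one]
  ring

lemma derivative_X_mul_X_sq_sub_one_pow_succ (n : ℕ) :
    derivative (X * (X ^ 2 - 1 : R[X]) ^ (n + 1)) =
      (2 * n + 3) • (X ^ 2 - 1) ^ (n + 1) + (2 * (n + 1)) • (X ^ 2 - 1) ^ n := by
  rw [derivative_mul, derivative_X, derivative_X_sq_sub_one_pow_succ]
  simp only [nsmul_eq_mul]
  push_cast
  ring

def rodrigues (n : ℕ) : R[X] := derivative^[n] ((X ^ 2 - 1) ^ n)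

lemma rodrigues_succ_succ [IsDomain R] [CharZero R] (n : ℕ) :
    (rodrigues (n + 2) : R[X]) =
      2 * (2 * (n : R[X]) + 3) * X * rodrigues (n + 1) -
        4 * ((n : R[X]) + 1) ^ 2 * rodrigues n := by
  -- Expand `D^(n+2) (X² - 1)^(n+2)` as `D^(n+1) ∘ D` and as `D^n ∘ D²`, then eliminate `U`.
  set U : R[X] := derivative^[n] ((X ^ 2 - 1) ^ (n + 1))
  have first : rodrigues (n + 2) = (2 * (n + 2)) • (rodrigues (n + 1) * X + (n + 1) • U) := by
    rw [rodrigues, Function.iterate_succ_apply, derivative_X_sq_sub_one_pow_succ,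
      iterate_derivative_smul, mul_comm X, iterate_derivative_mul_X, Nat.add_sub_cancel]
    rfl
  have second :
      rodrigues (n + 2) = (2 * (n + 2)) • ((2 * n + 3) • U + (2 * (n + 1)) • rodrigues n) := by
    rw [rodrigues, Function.iterate_add_apply (m := n) (n := 2), Function.iterate_succ_apply,
      Function.iterate_one, derivative_X_sq_sub_one_pow_succ, derivative_smul,
      derivative_X_mul_X_sq_sub_one_pow_succ, iterate_derivative_smul, iterate_map_add,
      iterate_derivative_smul, iterate_derivative_smul]
    rfl
  simp only [nsmul_eq_mul] at first second
  push_cast at first second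
  have hn : ((n : R[X]) + 2) ≠ 0 := by
    exact_mod_cast (Nat.cast_ne_zero (R := R[X])).mpr (n + 1).succ_ne_zero
  refine mul_left_cancel₀ hn ?_
  linear_combination (2 * (n : R[X]) + 3) * first - ((n : R[X]) + 1) * second

end Rodrigues

section Bonnet

variable {K : Type*} [Field K]

def SatisfiesBonnet (t : K) (f : ℕ → K) : Prop :=
  ∀ n : ℕ, (n + 2 : K) * f (n + 2) = (2 * n + 3) * t * f (n + 1) - (n + 1) * f n

lemma SatisfiesBonnet.eq [CharZero K] {t : K} {f g : ℕ → K} (hf : SatisfiesBonnet t f)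
    (hg : SatisfiesBonnet t g) (h₀ : f 0 = g 0) (h₁ : f 1 = g 1) : f = g := by
  suffices ∀ n, f n = g n ∧ f (n + 1) = g (n + 1) from funext fun n => (this n).1
  intro n
  induction n with
  | zero => exact ⟨h₀, h₁⟩
  | succ n ih =>
    refine ⟨ih.2, mul_left_cancel₀ (a := (n + 2 : K)) ?_ ?_⟩
    · exact_mod_cast (n + 1).succ_ne_zero
    · rw [hf, hg, ih.1, ih.2]

end Bonnet

lemma legendre_eq_smul_rodrigues (n : ℕ) :
    legendre n = (1 / ((2 : ℝ) ^ n * n.factorial)) • rodrigues n := rfl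

lemma satisfiesBonnet_eval_legendre (t : ℝ) :
    SatisfiesBonnet t fun n => (legendre n).eval t := by
  intro n
  have h := congrArg (Polynomial.eval t) (rodrigues_succ_succ (R := ℝ) n)
  simp only [Polynomial.eval_sub, Polynomial.eval_mul, Polynomial.eval_add, Polynomial.eval_pow,
    Polynomial.eval_ofNat, Polynomial.eval_natCast, Polynomial.eval_X, Polynomial.eval_one] at h
  simp only [legendre_eq_smul_rodrigues, Polynomial.eval_smul, smul_eq_mul, h,
    Nat.factorial_succ, pow_succ]
  push_cast
  field_simp
  ring

lemma eval_legendre_zero (t : ℝ) : (legendre 0).eval t = 1 := by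
  simp [legendre]

lemma eval_legendre_one (t : ℝ) : (legendre 1).eval t = t := by
  norm_num [legendre, ← mul_assoc]

lemma eval_one_legendre (n : ℕ) : (legendre n).eval 1 = 1 := by
  have hconst : SatisfiesBonnet (1 : ℝ) fun _ => 1 := fun n => by ring
  exact congrFun ((satisfiesBonnet_eval_legendre 1).eq hconst
    (eval_legendre_zero 1) (eval_legendre_one 1)) n

section GeneratingSeries

/-- The Taylor coefficients of `(1 - z)^(-1/2)`. -/
def invSqrtCoeff (n : ℕ) : ℝ := n.centralBinom / 4 ^ n

lemma invSqrtCoeff_zero : invSqrtCoeff 0 = 1 := by simp [invSqrtCoeff]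

lemma invSqrtCoeff_nonneg (n : ℕ) : 0 ≤ invSqrtCoeff n := by unfold invSqrtCoeff; positivity

lemma invSqrtCoeff_le_one (n : ℕ) : invSqrtCoeff n ≤ 1 := by
  rw [invSqrtCoeff, div_le_one (by positivity)]
  exact_mod_cast n.centralBinom_le_four_pow

lemma two_mul_succ_mul_invSqrtCoeff_succ (n : ℕ) :
    2 * (n + 1) * invSqrtCoeff (n + 1) = (2 * n + 1) * invSqrtCoeff n := by
  have h : ((n : ℝ) + 1) * (n + 1).centralBinom = 2 * (2 * n + 1) * n.centralBinom := by
    exact_mod_cast n.succ_mul_centralBinom_succ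
  simp only [invSqrtCoeff, pow_succ]
  field_simp
  linear_combination 2 * h

open PowerSeries Finset

def invSqrtSeries : ℂ⟦X⟧ := mk fun n => (invSqrtCoeff n : ℂ)

lemma derivative_rescale_invSqrtSeries (w : ℂ) :
    d⁄dX ℂ (rescale w invSqrtSeries) - C w * (X * d⁄dX ℂ (rescale w invSqrtSeries)) =
      C (w / 2) * rescale w invSqrtSeries := by
  ext n
  rcases n with _ | n
  · have h : 2 * (invSqrtCoeff 1 : ℂ) = invSqrtCoeff 0 := by
      exact_mod_cast by simpa using two_mul_succ_mul_invSqrtCoeff_succ 0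
    simp only [map_sub, coeff_C_mul, coeff_zero_X_mul, coeff_derivative, coeff_rescale,
      invSqrtSeries, coeff_mk]
    linear_combination w / 2 * h
  · have h : 2 * ((n : ℂ) + 2) * invSqrtCoeff (n + 2) = (2 * n + 3) * invSqrtCoeff (n + 1) := by
      exact_mod_cast two_mul_succ_mul_invSqrtCoeff_succ (n + 1)
    simp only [invSqrtSeries, map_sub, coeff_derivative, coeff_rescale, coeff_mk, Nat.cast_add,
      Nat.cast_one, coeff_C_mul, coeff_succ_X_mul]
    linear_combination w ^ (n + 2) / 2 * h

/-- With `w * v = 1` and `w + v = 2 t`, this is `(1 - 2 t X + X²)^(-1/2)`. -/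
def legendreGenSeries (w v : ℂ) : ℂ⟦X⟧ := rescale w invSqrtSeries * rescale v invSqrtSeries

lemma satisfiesBonnet_coeff_legendreGenSeries {w v : ℂ} (hwv : w * v = 1) :
    SatisfiesBonnet ((w + v) / 2) fun n => coeff n (legendreGenSeries w v) := by
  -- `(1 - 2 t X + X²) H' = (t - X) H` for `t = (w + v) / 2`
  have ode : d⁄dX ℂ (legendreGenSeries w v) - C (w + v) * (X * d⁄dX ℂ (legendreGenSeries w v)) +
      X ^ 2 * d⁄dX ℂ (legendreGenSeries w v) =
        C ((w + v) / 2) * legendreGenSeries w v - X * legendreGenSeries w v := by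
    have hw := derivative_rescale_invSqrtSeries w
    have hv := derivative_rescale_invSqrtSeries v
    have hCwv : C w * C v = 1 := by rw [← map_mul, hwv, map_one]
    have hC : C w * C (v / 2) + C v * C (w / 2) = 1 := by
      rw [← map_mul, ← map_mul, ← map_add, ← map_one C]
      congr 1
      linear_combination hwv
    rw [add_div, map_add, map_add, legendreGenSeries, Derivation.leibniz, smul_eq_mul, smul_eq_mul]
    linear_combination (1 - C w * X) * rescale w invSqrtSeries * hv +
      (1 - C v * X) * rescale v invSqrtSeries * hw -
      X ^ 2 * (rescale w invSqrtSeries * d⁄dX ℂ (rescale v invSqrtSeries) +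
        rescale v invSqrtSeries * d⁄dX ℂ (rescale w invSqrtSeries)) * hCwv -
      X * rescale w invSqrtSeries * rescale v invSqrtSeries * hC
  intro n
  have hcoeff := congrArg (coeff (n + 1)) ode
  simp only [map_sub, map_add, add_mul, coeff_C_mul, coeff_succ_X_mul, coeff_X_pow_mul',
    coeff_derivative] at hcoeff
  rcases n with _ | n
  · simp only [zero_add, Nat.reduceAdd, Nat.cast_one, CharP.cast_eq_zero, mul_one,
      Nat.not_ofNat_le_one, ↓reduceIte, add_zero, coeff_zero_eq_constantCoeff, mul_zero,
      one_mul] at hcoeff ⊢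
    linear_combination hcoeff
  · simp only [Nat.cast_add, Nat.cast_one, le_add_iff_nonneg_left, zero_le, ↓reduceIte,
      Nat.reduceSubDiff] at hcoeff ⊢
    linear_combination hcoeff

lemma coeff_legendreGenSeries (w v : ℂ) (n : ℕ) :
    coeff n (legendreGenSeries w v) =
      ∑ p ∈ antidiagonal n, (invSqrtCoeff p.1 * invSqrtCoeff p.2 : ℝ) * (w ^ p.1 * v ^ p.2) := by
  simp only [legendreGenSeries, coeff_mul, coeff_rescale, invSqrtSeries, coeff_mk]
  push_cast
  exact Finset.sum_congr rfl fun _ _ => by ring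

lemma eval_legendre_eq_coeff_legendreGenSeries {t : ℝ} {w v : ℂ} (hwv : w * v = 1)
    (ht : w + v = 2 * t) (n : ℕ) :
    (((legendre n).eval t : ℝ) : ℂ) = coeff n (legendreGenSeries w v) := by
  have hP : SatisfiesBonnet ((w + v) / 2) fun n => (((legendre n).eval t : ℝ) : ℂ) := fun n => by
    rw [ht, mul_div_cancel_left₀ _ two_ne_zero]
    have h := satisfiesBonnet_eval_legendre t n
    simp only at h ⊢
    exact_mod_cast h
  refine congrFun (hP.eq (satisfiesBonnet_coeff_legendreGenSeries hwv) ?_ ?_) n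
  · simp [coeff_legendreGenSeries, eval_legendre_zero, invSqrtCoeff_zero]
  · have h : 2 * (invSqrtCoeff 1 : ℂ) = 1 := by
      exact_mod_cast by simpa [invSqrtCoeff_zero] using two_mul_succ_mul_invSqrtCoeff_succ 0
    simp only [eval_legendre_one, coeff_legendreGenSeries, Complex.ofReal_mul,
      Nat.sum_antidiagonal_succ, invSqrtCoeff_zero, Complex.ofReal_one, zero_add, one_mul, pow_zero,
      pow_one, HasAntidiagonal.antidiagonal_zero, sum_singleton, mul_one]
    linear_combination -(w + v) / 2 * h - ht / 2

lemma sum_antidiagonal_invSqrtCoeff_mul (n : ℕ) :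
    ∑ p ∈ antidiagonal n, invSqrtCoeff p.1 * invSqrtCoeff p.2 = 1 := by
  have h := eval_legendre_eq_coeff_legendreGenSeries (t := 1) (w := 1) (v := 1) (by norm_num)
    (by norm_num) n
  rw [eval_one_legendre, coeff_legendreGenSeries] at h
  simp only [one_pow, mul_one] at h
  exact_mod_cast h.symm

lemma norm_coeff_legendreGenSeries_le_one {w v : ℂ} (hw : ‖w‖ ≤ 1) (hv : ‖v‖ ≤ 1) (n : ℕ) :
    ‖coeff n (legendreGenSeries w v)‖ ≤ 1 := by
  rw [coeff_legendreGenSeries, ← sum_antidiagonal_invSqrtCoeff_mul n]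
  refine (norm_sum_le _ _).trans (Finset.sum_le_sum fun p _ => ?_)
  have hp : 0 ≤ invSqrtCoeff p.1 * invSqrtCoeff p.2 :=
    mul_nonneg (invSqrtCoeff_nonneg _) (invSqrtCoeff_nonneg _)
  rw [norm_mul, Complex.norm_real, Real.norm_of_nonneg hp]
  refine mul_le_of_le_one_right hp ?_
  rw [norm_mul, norm_pow, norm_pow]
  exact mul_le_one₀ (pow_le_one₀ (norm_nonneg _) hw) (by positivity)
    (pow_le_one₀ (norm_nonneg _) hv)

lemma exists_norm_eq_one_re_eq {t : ℝ} (ht : |t| ≤ 1) : ∃ w : ℂ, ‖w‖ = 1 ∧ w.re = t := by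
  refine ⟨⟨t, √(1 - t ^ 2)⟩, ?_, rfl⟩
  have : 0 ≤ 1 - t ^ 2 := by nlinarith [abs_le.mp ht]
  rw [Complex.norm_def, Complex.normSq_mk, ← sq, ← sq, Real.sq_sqrt this]
  simp

lemma eval_legendre_eq_coeff_legendreGenSeries_conj {t : ℝ} {w : ℂ} (hw : ‖w‖ = 1)
    (hwt : w.re = t) (n : ℕ) :
    (((legendre n).eval t : ℝ) : ℂ) = coeff n (legendreGenSeries w (starRingEnd ℂ w)) := by
  refine eval_legendre_eq_coeff_legendreGenSeries ?_ ?_ n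
  · rw [Complex.mul_conj', hw, Complex.ofReal_one, one_pow]
  · rw [Complex.add_conj, hwt, Complex.ofReal_mul, Complex.ofReal_ofNat]

lemma abs_eval_legendre_le_one {t : ℝ} (ht : |t| ≤ 1) (n : ℕ) : |(legendre n).eval t| ≤ 1 := by
  obtain ⟨w, hw, hwt⟩ := exists_norm_eq_one_re_eq ht
  rw [← Real.norm_eq_abs, ← Complex.norm_real, eval_legendre_eq_coeff_legendreGenSeries_conj hw hwt]
  exact norm_coeff_legendreGenSeries_le_one hw.le (by rw [Complex.norm_conj, hw]) n

end GeneratingSeries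

section InvSqrt

open PowerSeries Finset

def invSqrtOneSub (z : ℂ) : ℂ := ∑' n, (invSqrtCoeff n : ℂ) * z ^ n

lemma summable_norm_invSqrtCoeff_mul_pow {z : ℂ} (hz : ‖z‖ < 1) :
    Summable fun n => ‖(invSqrtCoeff n : ℂ) * z ^ n‖ := by
  refine (summable_geometric_of_lt_one (norm_nonneg z) hz).of_nonneg_of_le (fun _ => norm_nonneg _)
    fun n => ?_
  rw [norm_mul, Complex.norm_real, Real.norm_of_nonneg (invSqrtCoeff_nonneg n), norm_pow]
  exact mul_le_of_le_one_left (by positivity) (invSqrtCoeff_le_one n)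

lemma hasSum_coeff_legendreGenSeries_mul_pow {w v u : ℂ} (hw : ‖u * w‖ < 1) (hv : ‖u * v‖ < 1) :
    HasSum (fun n => coeff n (legendreGenSeries w v) * u ^ n)
      (invSqrtOneSub (u * w) * invSqrtOneSub (u * v)) := by
  have hsw := summable_norm_invSqrtCoeff_mul_pow hw
  have hsv := summable_norm_invSqrtCoeff_mul_pow hv
  have hterm : ∀ n, coeff n (legendreGenSeries w v) * u ^ n = ∑ p ∈ antidiagonal n,
      (invSqrtCoeff p.1 : ℂ) * (u * w) ^ p.1 * ((invSqrtCoeff p.2 : ℂ) * (u * v) ^ p.2) := by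
    intro n
    rw [coeff_legendreGenSeries, sum_mul]
    refine sum_congr rfl fun p hp => ?_
    rw [← mem_antidiagonal.mp hp]
    push_cast
    ring
  simp only [hterm, invSqrtOneSub]
  rw [tsum_mul_tsum_eq_tsum_sum_antidiagonal_of_summable_norm hsw hsv]
  exact (summable_norm_sum_mul_antidiagonal_of_summable_norm hsw hsv).of_norm.hasSum

lemma invSqrtOneSub_mul_self {z : ℂ} (hz : ‖z‖ < 1) :
    invSqrtOneSub z * invSqrtOneSub z = (1 - z)⁻¹ := by
  have h := hasSum_coeff_legendreGenSeries_mul_pow (w := 1) (v := 1) (u := z) (by simpa) (by simpa)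
  have hcoeff : ∀ n, coeff n (legendreGenSeries 1 1) = 1 := fun n => by
    simp only [coeff_legendreGenSeries, one_pow, mul_one]
    exact_mod_cast sum_antidiagonal_invSqrtCoeff_mul n
  simp only [hcoeff, one_mul, mul_one] at h
  exact h.unique (hasSum_geometric_of_norm_lt_one hz)

lemma invSqrtOneSub_conj (z : ℂ) :
    invSqrtOneSub (starRingEnd ℂ z) = starRingEnd ℂ (invSqrtOneSub z) := by
  simp [invSqrtOneSub, Complex.conj_tsum]

lemma norm_invSqrtOneSub_sq {z : ℂ} (hz : ‖z‖ < 1) : ‖invSqrtOneSub z‖ ^ 2 = ‖1 - z‖⁻¹ := by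
  rw [sq, ← norm_mul, invSqrtOneSub_mul_self hz, norm_inv]

lemma norm_one_sub_mul {t u : ℝ} {w : ℂ} (hw : ‖w‖ = 1) (hwt : w.re = t) :
    ‖1 - u * w‖ = √(1 - 2 * t * u + u ^ 2) := by
  rw [Complex.norm_def, Complex.normSq_apply]
  congr 1
  have := Complex.sq_norm w
  rw [hw, Complex.normSq_apply] at this
  simp only [Complex.sub_re, Complex.one_re, Complex.re_ofReal_mul, Complex.sub_im,
    Complex.one_im, Complex.im_ofReal_mul, ← hwt]
  linear_combination -u ^ 2 * this

theorem hasSum_eval_legendre_mul_pow {t u : ℝ} (ht : |t| ≤ 1) (hu : |u| < 1) :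
    HasSum (fun n => (legendre n).eval t * u ^ n) (√(1 - 2 * t * u + u ^ 2))⁻¹ := by
  obtain ⟨w, hw, hwt⟩ := exists_norm_eq_one_re_eq ht
  have huw : ‖(u : ℂ) * w‖ < 1 := by rwa [norm_mul, hw, mul_one, Complex.norm_real]
  have huv : ‖(u : ℂ) * starRingEnd ℂ w‖ < 1 := by rwa [norm_mul, Complex.norm_conj, ← norm_mul]
  have hval : invSqrtOneSub (u * w) * invSqrtOneSub (u * starRingEnd ℂ w) =
      ((√(1 - 2 * t * u + u ^ 2))⁻¹ : ℝ) := by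
    rw [← Complex.conj_ofReal u, ← map_mul, invSqrtOneSub_conj, Complex.conj_ofReal,
      Complex.mul_conj', ← Complex.ofReal_pow, norm_invSqrtOneSub_sq huw, norm_one_sub_mul hw hwt]
  have h := hasSum_coeff_legendreGenSeries_mul_pow huw huv
  simp only [hval, ← eval_legendre_eq_coeff_legendreGenSeries_conj hw hwt] at h
  exact_mod_cast h

end InvSqrt

lemma norm_sub_sum_range_le_of_hasSum {E : Type*} [SeminormedAddCommGroup E] {f : ℕ → E} {s : E}
    {C r : ℝ} (hr : r < 1) (hf : ∀ n, ‖f n‖ ≤ C * r ^ n) (hs : HasSum f s) (N : ℕ) :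
    ‖s - ∑ n ∈ Finset.range N, f n‖ ≤ C * r ^ N / (1 - r) := by
  rw [norm_sub_rev, ← dist_eq_norm]
  refine dist_le_of_le_geometric_of_tendsto r C hr (fun n => ?_) hs.tendsto_sum_nat N
  rw [dist_eq_norm, Finset.sum_range_succ, sub_add_cancel_left, norm_neg]
  exact hf n

lemma norm_sub_eq_mul_sqrt {E : Type*} [NormedAddCommGroup E] [InnerProductSpace ℝ E] (x : E)
    {y : E} (hy : y ≠ 0) :
    ‖y - x‖ = ‖y‖ * √(1 - 2 * (⟪x, y⟫ / (‖x‖ * ‖y‖)) * (‖x‖ / ‖y‖) + (‖x‖ / ‖y‖) ^ 2) := by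
  have hy' : ‖y‖ ≠ 0 := norm_ne_zero_iff.mpr hy
  have hsq : ‖y - x‖ ^ 2 =
      ‖y‖ ^ 2 * (1 - 2 * (⟪x, y⟫ / (‖x‖ * ‖y‖)) * (‖x‖ / ‖y‖) + (‖x‖ / ‖y‖) ^ 2) := by
    rcases eq_or_ne x 0 with rfl | hx
    · simp
    have hx' : ‖x‖ ≠ 0 := norm_ne_zero_iff.mpr hx
    rw [norm_sub_sq_real, real_inner_comm]
    field_simp
  rw [← Real.sqrt_sq (norm_nonneg (y - x)), hsq, Real.sqrt_mul (sq_nonneg _),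
    Real.sqrt_sq (norm_nonneg y)]

lemma abs_inv_sqrt_sub_sum_eval_legendre_le {t u : ℝ} (ht : |t| ≤ 1) (hu₀ : 0 ≤ u) (hu₁ : u < 1)
    (N : ℕ) :
    |(√(1 - 2 * t * u + u ^ 2))⁻¹ - ∑ l ∈ Finset.range N, (legendre l).eval t * u ^ l| ≤
      u ^ N / (1 - u) := by
  have hterm (n : ℕ) : ‖(legendre n).eval t * u ^ n‖ ≤ 1 * u ^ n := by
    rw [norm_mul, norm_pow, Real.norm_of_nonneg hu₀]
    exact mul_le_mul_of_nonneg_right (abs_eval_legendre_le_one ht n) (by positivity)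
  simpa using norm_sub_sum_range_le_of_hasSum hu₁ hterm
    (hasSum_eval_legendre_mul_pow ht (abs_lt.mpr ⟨by linarith, hu₁⟩)) N

theorem multipole_truncation_bound_general (r₁ r₂ : ℝ) (c : ℕ)
    (x y : EuclideanSpace ℝ (Fin 3))
    (hx : ‖x‖ ≤ r₁) (h₁₂ : r₁ < r₂) (hy : ‖y‖ = r₂) :
    |1 / ‖y - x‖ -
        ∑ l ∈ Finset.range (c + 1),
          ‖x‖ ^ l / r₂ ^ (l + 1) * (legendre l).eval (⟪x, y⟫ / (‖x‖ * ‖y‖))|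
      ≤ 1 / (r₂ - r₁) * (r₁ / r₂) ^ (c + 1) := by
  subst hy
  have hy₀ : 0 < ‖y‖ := (norm_nonneg x).trans_lt (hx.trans_lt h₁₂)
  set t := ⟪x, y⟫ / (‖x‖ * ‖y‖)
  have ht : |t| ≤ 1 := abs_real_inner_div_norm_mul_norm_le_one x y
  set u := ‖x‖ / ‖y‖
  have hu₀ : 0 ≤ u := by positivity
  have hu₁ : u < 1 := (div_lt_one hy₀).mpr (hx.trans_lt h₁₂)
  have hdist : 1 / ‖y - x‖ = 1 / ‖y‖ * (√(1 - 2 * t * u + u ^ 2))⁻¹ := by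
    rw [norm_sub_eq_mul_sqrt x (norm_pos_iff.mp hy₀), one_div, mul_inv, one_div]
  have hsum : ∑ l ∈ Finset.range (c + 1), ‖x‖ ^ l / ‖y‖ ^ (l + 1) * (legendre l).eval t =
      1 / ‖y‖ * ∑ l ∈ Finset.range (c + 1), (legendre l).eval t * u ^ l := by
    rw [Finset.mul_sum]
    refine Finset.sum_congr rfl fun l _ => ?_
    rw [div_pow, pow_succ]
    field_simp
  rw [hdist, hsum, ← mul_sub, abs_mul, abs_of_pos (by positivity)]
  calc 1 / ‖y‖ * |_| ≤ 1 / ‖y‖ * (u ^ (c + 1) / (1 - u)) := by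
        gcongr
        exact abs_inv_sqrt_sub_sum_eval_legendre_le ht hu₀ hu₁ (c + 1)
    _ = 1 / (‖y‖ - ‖x‖) * u ^ (c + 1) := by
      have : ‖y‖ - ‖x‖ ≠ 0 := by linarith
      simp only [u]
      field_simp
    _ ≤ 1 / (‖y‖ - r₁) * (r₁ / ‖y‖) ^ (c + 1) := by
      gcongr
      exact div_le_div_of_nonneg_right hx hy₀.le

/-- Truncation bound for the multipole expansion of the 3D Laplace kernel:
for `0 < ‖x‖ ≤ r₁ < r₂ = ‖y‖`,
`|1/‖y-x‖ - ∑_{l=0}^c ‖x‖^l/r₂^{l+1} P_l(cos θ)| ≤ (1/(r₂-r₁)) (r₁/r₂)^{c+1}`. -/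
theorem multipole_truncation_bound (r₁ r₂ : ℝ) (c : ℕ)
    (x y : EuclideanSpace ℝ (Fin 3))
    (hx0 : 0 < ‖x‖) (hx : ‖x‖ ≤ r₁) (h₁₂ : r₁ < r₂) (hy : ‖y‖ = r₂) :
    |1 / ‖y - x‖ -
        ∑ l ∈ Finset.range (c + 1),
          ‖x‖ ^ l / r₂ ^ (l + 1) * (legendre l).eval (⟪x, y⟫ / (‖x‖ * ‖y‖))|
      ≤ 1 / (r₂ - r₁) * (r₁ / r₂) ^ (c + 1) :=
  multipole_truncation_bound_general r₁ r₂ c x y hx h₁₂ hy
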